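/- Let V, Q be Hilbert spaces, a_h : V × V → ℝ bounded and coercive bilinear form with constants and b_h : V × Q → ℝ bounded bilinear form satisfying the discrete inf-sup condition with constant β' > 0, c₁_h : Q × Q → ℝ positive semi-definite, and suppose the homogeneous system a_h(u,v) + b_h(v,p) = 0 ∀v, b_h(u,q) − c₁_h(p,q) + d_h(q,w) = 0 ∀q, e_h(p,ζ) + c₂_h(w,ζ) = 0 ∀ζ holds, where after diagonal testing the cross terms combine to −2b₃_h(p,w) with |b₃_h(p,w)| ≤ (1/τ)‖p‖_Q‖w‖_W and c₁_h, c₂_h have lower bounds with constants satisfying the compatibility 1/(c₀/C_{s2}) < ε < (ρ_p/τ²)/C_{s4} for some ε. Then u = 0, p = 0 (its H¹-part), and w = 0. -/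

import Mathlib

/-!
Testing the three equations with `(u, p, w)` itself and adding them, the coupling terms `b_h`
cancel and the cross terms collapse to `2 b₃_h(p, w)`, so that
`a_h(u,u) + c₁_h(p,p) + c₂_h(w,w) = 2 b₃_h(p,w) ≤ (2/τ) φ0(p) w0(w)`.
Young's inequality with weight `ε` splits the right-hand side into `φ0(p)²/(τε) + (ε/τ) w0(w)²`,
and the compatibility condition on `ε` is exactly what lets the lower bounds for `c₁_h` and
`c₂_h` absorb both pieces. Every term of the remaining quadratic form is then forced to vanish,
giving `u = 0` and `w = 0`; finally `b_h(·, p) = 0` by the first equation, and the inf-sup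
condition gives `p = 0`.
-/

theorem two_mul_mul_le_div_mul_sq_add_mul_mul_sq {t ε : ℝ} (ht : 0 ≤ t) (hε : 0 < ε)
    (x y : ℝ) : 2 * t * (x * y) ≤ t / ε * x ^ 2 + t * ε * y ^ 2 := by
  have hsq : t / ε * x ^ 2 + t * ε * y ^ 2 - 2 * t * (x * y) = t / ε * (x - ε * y) ^ 2 := by
    field_simp
    ring
  rw [← sub_nonneg, hsq]
  exact mul_nonneg (div_nonneg ht hε.le) (sq_nonneg _)

theorem eq_zero_of_sq_add_sq_add_le_two_mul_mul {a b t ε x y R : ℝ} (ht : 0 ≤ t) (hε : 0 < ε)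
    (ha : t / ε < a) (hb : t * ε < b) (hR : 0 ≤ R)
    (h : a * x ^ 2 + b * y ^ 2 + R ≤ 2 * t * (x * y)) : x = 0 ∧ y = 0 ∧ R = 0 := by
  have hsum : (a - t / ε) * x ^ 2 + (b - t * ε) * y ^ 2 + R ≤ 0 := by
    linarith [two_mul_mul_le_div_mul_sq_add_mul_mul_sq ht hε x y]
  have hx : 0 ≤ (a - t / ε) * x ^ 2 := mul_nonneg (sub_pos.2 ha).le (sq_nonneg x)
  have hy : 0 ≤ (b - t * ε) * y ^ 2 := mul_nonneg (sub_pos.2 hb).le (sq_nonneg y)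
  refine ⟨?_, ?_, by linarith⟩
  · have : (a - t / ε) * x ^ 2 = 0 := by linarith
    simpa [(sub_pos.2 ha).ne'] using this
  · have : (b - t * ε) * y ^ 2 = 0 := by linarith
    simpa [(sub_pos.2 hb).ne'] using this

theorem eq_zero_of_infSup_of_forall_eq_zero {E F : Type*} [NormedAddCommGroup E]
    [NormedAddCommGroup F] (b : E → F → ℝ) {β : ℝ} (hβ : 0 < β) {q : F}
    (hinfsup : β * ‖q‖ ≤ ⨆ v : {v : E // v ≠ 0}, b v.1 q / ‖v.1‖) (hq : ∀ v, b v q = 0) :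
    q = 0 := by
  have hsup : (⨆ v : {v : E // v ≠ 0}, b v.1 q / ‖v.1‖) ≤ 0 :=
    Real.iSup_nonpos fun v => by rw [hq v.1, zero_div]
  have : ‖q‖ ≤ 0 := by nlinarith [norm_nonneg q]
  exact norm_le_zero_iff.1 this

/-- `φ0`, `φ1` are the `L²` and `H¹` seminorms of the `H¹`-component of `Q`, and `w0`, `w2`
seminorms on `W` that together control its norm. -/
theorem stmt_19_general {V Q W : Type*}
    [NormedAddCommGroup V] [InnerProductSpace ℝ V]
    [NormedAddCommGroup Q] [InnerProductSpace ℝ Q]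
    [NormedAddCommGroup W] [InnerProductSpace ℝ W]
    (ah : V →L[ℝ] V →L[ℝ] ℝ) (bh : V →L[ℝ] Q →L[ℝ] ℝ)
    (c1h : Q →L[ℝ] Q →L[ℝ] ℝ) (dh eh b3h : Q →L[ℝ] W →L[ℝ] ℝ)
    (c2h : W →L[ℝ] W →L[ℝ] ℝ)
    (φ0 φ1 : Q → ℝ) (w0 w2 : W → ℝ)
    (α β' τ c₀ κ ρp D Cs2 Cs3 Cs4 Cs5 CW : ℝ)
    (hα : 0 < α) (hβ' : 0 < β') (hτ : 0 < τ) (hc₀ : 0 < c₀) (hκ : 0 < κ)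
    (hD : 0 < D) (hCs2 : 0 < Cs2) (hCs3 : 0 < Cs3)
    (hCs4 : 0 < Cs4) (hCs5 : 0 < Cs5)
    (h_coer : ∀ v : V, α * ‖v‖ ^ 2 ≤ ah v v)
    (h_infsup : ∀ q : Q, β' * ‖q‖ ≤ ⨆ v : {v : V // v ≠ 0}, bh v.1 q / ‖v.1‖)
    (hc1_low : ∀ q : Q,
      (c₀ / (τ * Cs2)) * φ0 q ^ 2 + (κ / Cs3) * φ1 q ^ 2 ≤ c1h q q)
    (hc2_low : ∀ ζ : W,
      (ρp / (τ ^ 3 * Cs4)) * w0 ζ ^ 2 + (D / (τ * Cs5)) * w2 ζ ^ 2 ≤ c2h ζ ζ)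
    (hb3_bdd : ∀ (q : Q) (ζ : W), |b3h q ζ| ≤ (1 / τ) * (φ0 q * w0 ζ))
    (hcross : ∀ (q : Q) (ζ : W), eh q ζ - dh q ζ = -(2 * b3h q ζ))
    (hWnorm : ∀ ζ : W, ‖ζ‖ ^ 2 ≤ CW * (w0 ζ ^ 2 + w2 ζ ^ 2))
    (hε : ∃ ε : ℝ, Cs2 / c₀ < ε ∧ ε < (ρp / τ ^ 2) / Cs4)
    (u : V) (p : Q) (w : W)
    (heq1 : ∀ v : V, ah u v + bh v p = 0)
    (heq2 : ∀ q : Q, bh u q - c1h p q + dh q w = 0)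
    (heq3 : ∀ ζ : W, eh p ζ + c2h w ζ = 0) :
    u = 0 ∧ p = 0 ∧ w = 0 := by
  obtain ⟨ε, hε_low, hε_high⟩ := hε
  have hε_pos : 0 < ε := (div_pos hCs2 hc₀).trans hε_low
  have henergy : ah u u + c1h p p + c2h w w = 2 * b3h p w := by
    linarith [heq1 u, heq2 p, heq3 w, hcross p w]
  have hc1_absorbs : 1 / τ / ε < c₀ / (τ * Cs2) := by
    rw [div_div, div_lt_div_iff₀ (by positivity) (by positivity), one_mul, mul_comm c₀, mul_assoc]
    exact mul_lt_mul_of_pos_left ((div_lt_iff₀ hc₀).1 hε_low) hτ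
  have hc2_absorbs : 1 / τ * ε < ρp / (τ ^ 3 * Cs4) := by
    rw [lt_div_iff₀ (by positivity)]
    have : ε * (τ ^ 2 * Cs4) < ρp := by rwa [div_div, lt_div_iff₀ (by positivity)] at hε_high
    calc 1 / τ * ε * (τ ^ 3 * Cs4) = ε * (τ ^ 2 * Cs4) := by field_simp
      _ < ρp := this
  obtain ⟨-, hw0_eq, hrest⟩ := eq_zero_of_sq_add_sq_add_le_two_mul_mul
    (x := φ0 p) (y := w0 w) (R := α * ‖u‖ ^ 2 + κ / Cs3 * φ1 p ^ 2 + D / (τ * Cs5) * w2 w ^ 2)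
    (by positivity) hε_pos hc1_absorbs hc2_absorbs (by positivity)
    (by linarith [h_coer u, hc1_low p, hc2_low w, (abs_le.1 (hb3_bdd p w)).2])
  obtain ⟨huφ1_sq, hw2_sq⟩ := (add_eq_zero_iff_of_nonneg (by positivity) (by positivity)).1 hrest
  obtain ⟨hu_sq, -⟩ := (add_eq_zero_iff_of_nonneg (by positivity) (by positivity)).1 huφ1_sq
  have hu : u = 0 := by simpa [hα.ne'] using hu_sq
  have hw : w = 0 := by
    have hw2 : w2 w = 0 := by simpa [hD.ne', hτ.ne', hCs5.ne'] using hw2_sq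
    simpa [hw0_eq, hw2] using hWnorm w
  have hp : p = 0 := eq_zero_of_infSup_of_forall_eq_zero (fun v q => bh v q) hβ' (h_infsup p)
    fun v => by simpa [hu] using heq1 v
  exact ⟨hu, hp, hw⟩

/-- Uniqueness for the homogeneous discrete system: with `a_h` coercive, `b_h`
satisfying the discrete inf-sup condition with constant `β' > 0`, stabilised lower
bounds for `c₁_h` and `c₂_h`, the cross terms combining to `−2b₃_h(p,w)` after
diagonal testing, the bound `|b₃_h(p,w)| ≤ (1/τ)‖p‖‖w‖` (in the `L²`-type seminorms
`φ0`, `w0`), and the compatibility `C_{s2}/c₀ < ε < (ρ_p/τ²)/C_{s4}`, the homogeneous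
system forces `u = 0`, `p = 0` and `w = 0`.  Here `V` is the discrete velocity space,
`Q` the discrete pressure-pair space (with `φ0`, `φ1` the `L²` and `H¹` seminorms of
its `H¹`-component), and `W` the discrete deflection space (with seminorms `w0`, `w2`
whose combination is equivalent to the full norm). -/
theorem stmt_19 {V Q W : Type*}
    [NormedAddCommGroup V] [InnerProductSpace ℝ V] [CompleteSpace V]
    [NormedAddCommGroup Q] [InnerProductSpace ℝ Q] [CompleteSpace Q]
    [NormedAddCommGroup W] [InnerProductSpace ℝ W] [CompleteSpace W]
    (ah : V →L[ℝ] V →L[ℝ] ℝ) (bh : V →L[ℝ] Q →L[ℝ] ℝ)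
    (c1h : Q →L[ℝ] Q →L[ℝ] ℝ) (dh eh b3h : Q →L[ℝ] W →L[ℝ] ℝ)
    (c2h : W →L[ℝ] W →L[ℝ] ℝ)
    (φ0 φ1 : Q → ℝ) (w0 w2 : W → ℝ)
    (α β' τ c₀ κ ρp D Cs2 Cs3 Cs4 Cs5 CW : ℝ)
    (hα : 0 < α) (hβ' : 0 < β') (hτ : 0 < τ) (hc₀ : 0 < c₀) (hκ : 0 < κ)
    (hρp : 0 < ρp) (hD : 0 < D) (hCs2 : 0 < Cs2) (hCs3 : 0 < Cs3)
    (hCs4 : 0 < Cs4) (hCs5 : 0 < Cs5) (hCW : 0 < CW)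
    (hφ0 : ∀ q : Q, 0 ≤ φ0 q) (hw0 : ∀ ζ : W, 0 ≤ w0 ζ)
    (h_coer : ∀ v : V, α * ‖v‖ ^ 2 ≤ ah v v)
    (h_infsup : ∀ q : Q, β' * ‖q‖ ≤ ⨆ v : {v : V // v ≠ 0}, bh v.1 q / ‖v.1‖)
    (hc1_low : ∀ q : Q,
      (c₀ / (τ * Cs2)) * φ0 q ^ 2 + (κ / Cs3) * φ1 q ^ 2 ≤ c1h q q)
    (hc2_low : ∀ ζ : W,
      (ρp / (τ ^ 3 * Cs4)) * w0 ζ ^ 2 + (D / (τ * Cs5)) * w2 ζ ^ 2 ≤ c2h ζ ζ)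
    (hb3_bdd : ∀ (q : Q) (ζ : W), |b3h q ζ| ≤ (1 / τ) * (φ0 q * w0 ζ))
    (hcross : ∀ (q : Q) (ζ : W), eh q ζ - dh q ζ = -(2 * b3h q ζ))
    (hWnorm : ∀ ζ : W, ‖ζ‖ ^ 2 ≤ CW * (w0 ζ ^ 2 + w2 ζ ^ 2))
    (hε : ∃ ε : ℝ, Cs2 / c₀ < ε ∧ ε < (ρp / τ ^ 2) / Cs4)
    (u : V) (p : Q) (w : W)
    (heq1 : ∀ v : V, ah u v + bh v p = 0)
    (heq2 : ∀ q : Q, bh u q - c1h p q + dh q w = 0)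
    (heq3 : ∀ ζ : W, eh p ζ + c2h w ζ = 0) :
    u = 0 ∧ p = 0 ∧ w = 0 :=
  stmt_19_general ah bh c1h dh eh b3h c2h φ0 φ1 w0 w2 α β' τ c₀ κ ρp D Cs2 Cs3 Cs4 Cs5 CW hα hβ' hτ
    hc₀ hκ hD hCs2 hCs3 hCs4 hCs5 h_coer h_infsup hc1_low hc2_low hb3_bdd hcross hWnorm hε u p w
    heq1 heq2 heq3
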